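/- arXiv:1210.0807 — 4 statements merged into one kernel-verified Lean document; each statement's English description precedes it below -/
import Mathlib

section
/- Under the bounds c1^{−1} ≤ f0 ≤ c1, c2^{−1} ≤ g0 ≤ c2 on [0,1]^d, with p0(δ,t) = p(t;δ)g0(t) the density of the multivariate current status observation, for 0 < σ ≤ c1 c2 one has ∑_{δ ∈ {0,1}^d} ∫_{[0,1]^d} (1/p0(δ,t)) 1{p0(δ,t) > σ} dt ≤ (2^d c1 c2 / d!) (log(c1 c2/σ))^d. -/
open MeasureTheory

/-- The orthant probability `p(t;δ)` for a density `f0` on `[0,1]^d`. -/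
noncomputable def orthProb (d : ℕ) (f0 : (Fin d → ℝ) → ℝ) (δ : Fin d → Bool)
    (t : Fin d → ℝ) : ℝ :=
  ∫ y in {y : Fin d → ℝ | (∀ j, y j ∈ Set.Icc (0:ℝ) 1) ∧
      ∀ j, if δ j then y j ≤ t j else t j < y j}, f0 y

/-!
On `[0,1]^d` the density `p0(δ, t)` lies within a factor `c1 c2` of the volume `∏ j, s_j` of
the orthant box at `t`, whose sides are `s_j = t_j` or `1 - t_j`. Hence each summand is at most
`c1 c2 ∫ (∏ s_j)⁻¹ 1{∏ s_j > b} dt` with `b = σ / (c1 c2)`, and after the measure preserving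
reflection `t ↦ s` this is `c1 c2 J_d(b)`, where `J_n(b)` is the integral of `(∏ t_j)⁻¹` over
`[0,1]^n ∩ {∏ t_j > b}`. Integrating out the first coordinate gives
`J_{n+1}(b) = ∫_b^1 J_n(b / x) dx / x`, whence `J_n(b) ≤ (log b⁻¹)^n / n!` by induction.
-/

open Set Real

theorem posLog_eq_log_of_one_le {x : ℝ} (hx : 1 ≤ x) : log⁺ x = log x :=
  posLog_eq_log (by rwa [abs_of_pos (zero_lt_one.trans_le hx)])

theorem inv_ite_le_mul_inv_ite {σ c p P : ℝ} (hσ : 0 ≤ σ) (hc : 0 < c)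
    (hlo : c⁻¹ * P ≤ p) (hup : p ≤ c * P) :
    (if σ < p then p⁻¹ else 0) ≤ c * if σ / c < P then P⁻¹ else 0 := by
  by_cases hp : σ < p
  · have hP : σ / c < P := by rw [div_lt_iff₀' hc]; linarith
    have hP0 : 0 < P := (div_nonneg hσ hc.le).trans_lt hP
    rw [if_pos hp, if_pos hP]
    calc p⁻¹ ≤ (c⁻¹ * P)⁻¹ := inv_anti₀ (by positivity) hlo
      _ = c * P⁻¹ := by rw [mul_inv, inv_inv]
  · rw [if_neg hp]
    split_ifs with hP
    · exact mul_nonneg hc.le (inv_nonneg.2 ((div_nonneg hσ hc.le).trans hP.le))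
    · rw [mul_zero]

theorem mul_mem_Icc_inv_mul {a b P c₁ c₂ : ℝ} (hc₁ : 0 < c₁) (hc₂ : 0 < c₂) (hP : 0 ≤ P)
    (ha : a ∈ Icc (c₁⁻¹ * P) (c₁ * P)) (hb : b ∈ Icc c₂⁻¹ c₂) :
    a * b ∈ Icc ((c₁ * c₂)⁻¹ * P) (c₁ * c₂ * P) := by
  have ha0 : 0 ≤ a := (by positivity : 0 ≤ c₁⁻¹ * P).trans ha.1
  have hb0 : 0 ≤ b := (by positivity : 0 ≤ c₂⁻¹).trans hb.1
  constructor
  · calc (c₁ * c₂)⁻¹ * P = c₁⁻¹ * P * c₂⁻¹ := by rw [mul_inv]; ring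
      _ ≤ a * b := mul_le_mul ha.1 hb.1 (by positivity) ha0
  · calc a * b ≤ c₁ * P * c₂ := mul_le_mul ha.2 hb.2 hb0 (by positivity)
      _ = c₁ * c₂ * P := by ring

theorem integral_fin_cons {E : Type*} [NormedAddCommGroup E] [NormedSpace ℝ E] {n : ℕ}
    {f : (Fin (n + 1) → ℝ) → E} (hf : Integrable f) :
    ∫ t, f t = ∫ x, ∫ u, f (Fin.cons x u) := by
  let e := (MeasurableEquiv.piFinSuccAbove (fun _ : Fin (n + 1) => ℝ) 0).symm
  have he : MeasurePreserving e := (volume_preserving_piFinSuccAbove _ 0).symm _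
  rw [← he.integral_comp e.measurableEmbedding, Measure.volume_eq_prod,
    integral_prod (fun p => f (e p)) ((he.integrable_comp_emb e.measurableEmbedding).2 hf)]
  simp [e, MeasurableEquiv.piFinSuccAbove_symm_apply, Fin.insertNthEquiv]

theorem continuousOn_inv_mul_log_div_pow {b : ℝ} (hb : 0 < b) (n : ℕ) :
    ContinuousOn (fun x => x⁻¹ * (log (x / b) ^ n / n.factorial)) (Ioi 0) :=
  (continuousOn_inv₀.mono fun _ hx => ne_of_gt hx).mul <|
    (((continuousOn_id.div_const b).log fun _ hx => (div_pos hx hb).ne').pow n).div_const _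

theorem integral_inv_mul_log_div_pow {b : ℝ} (hb : 0 < b) (hb1 : b ≤ 1) (n : ℕ) :
    ∫ x in b..1, x⁻¹ * (log (x / b) ^ n / n.factorial)
      = log b⁻¹ ^ (n + 1) / (n + 1).factorial := by
  have hpos : ∀ x ∈ uIcc b 1, 0 < x := fun x hx => hb.trans_le (uIcc_of_le hb1 ▸ hx).1
  have hderiv : ∀ x ∈ uIcc b 1,
      HasDerivAt (fun x => log (x / b) ^ (n + 1) / (n + 1).factorial)
        (x⁻¹ * (log (x / b) ^ n / n.factorial)) x := by
    intro x hx
    have hlog := ((hasDerivAt_id x).div_const b).log (div_pos (hpos x hx) hb).ne'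
    refine ((hlog.fun_pow (n + 1)).div_const ((n + 1).factorial : ℝ)).congr_deriv ?_
    have := (hpos x hx).ne'
    simp only [id, Nat.add_sub_cancel, Nat.factorial_succ]
    push_cast
    field_simp
  rw [intervalIntegral.integral_eq_sub_of_hasDerivAt hderiv
    ((continuousOn_inv_mul_log_div_pow hb n).mono hpos).intervalIntegrable]
  simp [log_inv]

def unitCube (n : ℕ) : Set (Fin n → ℝ) := univ.pi fun _ => Icc 0 1

theorem measurableSet_unitCube (n : ℕ) : MeasurableSet (unitCube n) :=
  .univ_pi fun _ => measurableSet_Icc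

theorem volume_unitCube (n : ℕ) : volume (unitCube n) = 1 := by
  rw [unitCube, volume_pi_pi]
  simp

noncomputable def invProdAbove (n : ℕ) (b : ℝ) : (Fin n → ℝ) → ℝ :=
  {t ∈ unitCube n | b < ∏ j, t j}.indicator fun t => (∏ j, t j)⁻¹

section invProdAbove

variable {n : ℕ} {b : ℝ}

theorem invProdAbove_of_mem_unitCube {t : Fin n → ℝ} (ht : t ∈ unitCube n) :
    invProdAbove n b t = if b < ∏ j, t j then (∏ j, t j)⁻¹ else 0 := by
  by_cases h : b < ∏ j, t j
  · rw [if_pos h]; exact indicator_of_mem (by exact ⟨ht, h⟩) _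
  · rw [if_neg h]; exact indicator_of_notMem (fun h' => h h'.2) _

theorem measurable_invProdAbove : Measurable (invProdAbove n b) := by
  have hprod : Measurable fun t : Fin n → ℝ => ∏ j, t j := by fun_prop
  exact hprod.inv.indicator
    ((measurableSet_unitCube n).inter (measurableSet_lt measurable_const hprod))

theorem invProdAbove_nonneg (t : Fin n → ℝ) : 0 ≤ invProdAbove n b t :=
  indicator_nonneg (fun _ ht => inv_nonneg.2 (Finset.prod_nonneg fun j _ => (ht.1 j trivial).1)) t

theorem invProdAbove_le (hb : 0 < b) (t : Fin n → ℝ) :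
    invProdAbove n b t ≤ (unitCube n).indicator (fun _ => b⁻¹) t := by
  by_cases ht : t ∈ unitCube n
  · rw [invProdAbove_of_mem_unitCube ht, indicator_of_mem ht]
    split_ifs with h
    · exact inv_anti₀ hb h.le
    · exact inv_nonneg.2 hb.le
  · rw [indicator_of_notMem ht]
    exact (indicator_of_notMem (fun h => ht h.1) _).le

theorem integrable_invProdAbove (hb : 0 < b) : Integrable (invProdAbove n b) := by
  refine Integrable.mono' (g := (unitCube n).indicator fun _ => b⁻¹) ?_
    measurable_invProdAbove.aestronglyMeasurable (.of_forall fun t => ?_)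
  · exact (integrable_indicator_iff (measurableSet_unitCube n)).2
      (integrableOn_const (by simp [volume_unitCube]))
  · rw [Real.norm_of_nonneg (invProdAbove_nonneg t)]
    exact invProdAbove_le hb t

theorem invProdAbove_of_one_le (hb : 1 ≤ b) : invProdAbove n b = 0 := by
  funext t
  refine indicator_of_notMem (fun ht => ?_) _
  exact hb.not_gt <| ht.2.trans_le <|
    Finset.prod_le_one (fun j _ => (ht.1 j trivial).1) fun j _ => (ht.1 j trivial).2

theorem invProdAbove_cons (hb : 0 < b) (x : ℝ) (u : Fin n → ℝ) :
    invProdAbove (n + 1) b (Fin.cons x u)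
      = (Ioc 0 1).indicator (fun x => x⁻¹ * invProdAbove n (b / x) u) x := by
  have hmem : (Fin.cons x u : Fin (n + 1) → ℝ) ∈ unitCube (n + 1) ↔
      x ∈ Icc 0 1 ∧ u ∈ unitCube n := by
    simp only [unitCube, mem_univ_pi, Fin.forall_fin_succ, Fin.cons_zero, Fin.cons_succ]
  by_cases hx : x ∈ Ioc 0 1
  · classical
    rw [indicator_of_mem hx]
    simp only [invProdAbove, indicator_apply, mem_ofPred_eq, hmem, Fin.prod_cons,
      div_lt_iff₀' hx.1, Ioc_subset_Icc_self hx, true_and, mul_inv, mul_ite, mul_zero]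
  · rw [indicator_of_notMem hx]
    refine indicator_of_notMem (fun h => hx ?_) _
    obtain ⟨hcube, hbx⟩ := h
    rw [Fin.prod_cons] at hbx
    refine ⟨?_, (hmem.1 hcube).1.2⟩
    refine (hmem.1 hcube).1.1.lt_of_ne' fun hx0 => ?_
    rw [hx0, zero_mul] at hbx
    exact hb.not_gt hbx

end invProdAbove

theorem integral_invProdAbove_cons_le {n : ℕ} {b : ℝ} (hb : 0 < b)
    (ih : ∀ {c : ℝ}, 0 < c → ∫ u, invProdAbove n c u ≤ log⁺ c⁻¹ ^ n / n.factorial) (x : ℝ) :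
    ∫ u, invProdAbove (n + 1) b (Fin.cons x u)
      ≤ (Ioc b 1).indicator (fun x => x⁻¹ * (log (x / b) ^ n / n.factorial)) x := by
  have hG_nonneg : 0 ≤ (Ioc b 1).indicator (fun x => x⁻¹ * (log (x / b) ^ n / n.factorial)) x :=
    indicator_nonneg (fun x hx => by
      have := log_nonneg ((one_le_div hb).2 hx.1.le)
      have := hb.trans hx.1
      positivity) x
  simp_rw [invProdAbove_cons hb]
  by_cases hx : x ∈ Ioc 0 1
  · simp only [indicator_of_mem hx, integral_const_mul]
    rcases le_or_gt x b with hxb | hbx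
    · rw [invProdAbove_of_one_le ((one_le_div hx.1).2 hxb), Pi.zero_def, integral_zero,
        mul_zero]
      exact hG_nonneg
    · rw [indicator_of_mem (show x ∈ Ioc b 1 from ⟨hbx, hx.2⟩)]
      grw [ih (div_pos hb hx.1), inv_div, posLog_eq_log_of_one_le ((one_le_div hb).2 hbx.le)]
      exact inv_nonneg.2 hx.1.le
  · simp only [indicator_of_notMem hx, integral_zero]
    exact hG_nonneg

theorem integral_invProdAbove_le (n : ℕ) {b : ℝ} (hb : 0 < b) :
    ∫ t, invProdAbove n b t ≤ log⁺ b⁻¹ ^ n / n.factorial := by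
  induction n generalizing b with
  | zero =>
    rw [Measure.volume_pi_eq_dirac ![], integral_dirac,
      invProdAbove_of_mem_unitCube fun j => j.elim0]
    split_ifs <;> simp
  | succ n ih =>
    rcases le_or_gt 1 b with h1 | h1
    · rw [invProdAbove_of_one_le h1, Pi.zero_def, integral_zero]
      exact div_nonneg (pow_nonneg posLog_nonneg _) (Nat.cast_nonneg _)
    have hG_int : IntegrableOn (fun x => x⁻¹ * (log (x / b) ^ n / n.factorial)) (Ioc b 1) :=
      ((continuousOn_inv_mul_log_div_pow hb n).mono fun x hx => hb.trans_le hx.1)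
        |>.integrableOn_Icc.mono_set Ioc_subset_Icc_self
    calc ∫ t, invProdAbove (n + 1) b t
        = ∫ x, ∫ u, invProdAbove (n + 1) b (Fin.cons x u) :=
          integral_fin_cons (integrable_invProdAbove hb)
      _ ≤ ∫ x, (Ioc b 1).indicator (fun x => x⁻¹ * (log (x / b) ^ n / n.factorial)) x :=
          integral_mono_of_nonneg
            (ae_of_all _ fun x => integral_nonneg fun u => invProdAbove_nonneg _)
            ((integrable_indicator_iff measurableSet_Ioc).2 hG_int)
            (ae_of_all _ (integral_invProdAbove_cons_le hb ih))
      _ = log⁺ b⁻¹ ^ (n + 1) / (n + 1).factorial := by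
          rw [integral_indicator measurableSet_Ioc, ← intervalIntegral.integral_of_le h1.le,
            integral_inv_mul_log_div_pow hb h1.le,
            posLog_eq_log_of_one_le ((one_le_inv₀ hb).2 h1.le)]

def orthantBox {d : ℕ} (δ : Fin d → Bool) (t : Fin d → ℝ) : Set (Fin d → ℝ) :=
  univ.pi fun j => if δ j then Icc 0 (t j) else Ioc (t j) 1

-- The side lengths of `orthantBox δ t`; as a map of `t`, a reflection of the coordinates with
-- `δ j = false`.
def orthantSides {d : ℕ} (δ : Fin d → Bool) (t : Fin d → ℝ) : Fin d → ℝ :=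
  fun j => if δ j then t j else 1 - t j

section orthantSides

variable {d : ℕ} (δ : Fin d → Bool)

theorem orthantSides_involutive : Function.Involutive (orthantSides δ) := by
  intro t; funext j; by_cases hj : δ j <;> simp [orthantSides, hj]

theorem measurable_orthantSides : Measurable (orthantSides δ) := by
  refine measurable_pi_lambda _ fun j => ?_
  by_cases hj : δ j <;> simp only [orthantSides, hj, if_true, Bool.false_eq_true, if_false] <;>
    fun_prop

theorem measurePreserving_orthantSides : MeasurePreserving (orthantSides δ) :=
  volume_preserving_pi (f := fun j (x : ℝ) => if δ j then x else 1 - x) fun j => by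
    by_cases hj : δ j
    · simp only [hj, if_true]; exact MeasurePreserving.id _
    · simpa [hj] using volume.measurePreserving_sub_left (1 : ℝ)

theorem orthantSides_mem_unitCube {t : Fin d → ℝ} (ht : t ∈ unitCube d) :
    orthantSides δ t ∈ unitCube d := fun j _ => by
  have := ht j trivial
  by_cases hj : δ j <;>
    simp only [orthantSides, hj, if_true, Bool.false_eq_true, if_false, mem_Icc] at this ⊢
  · exact this
  · constructor <;> linarith

end orthantSides

section orthantBox

variable {d : ℕ} {δ : Fin d → Bool} {t : Fin d → ℝ}

theorem measurableSet_orthantBox : MeasurableSet (orthantBox δ t) :=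
  .univ_pi fun j => by split_ifs <;> measurability

theorem setOf_orthant_eq_orthantBox (ht : t ∈ unitCube d) :
    {y : Fin d → ℝ | (∀ j, y j ∈ Icc 0 1) ∧ ∀ j, if δ j then y j ≤ t j else t j < y j}
      = orthantBox δ t := by
  ext y
  simp only [orthantBox, mem_ofPred_eq, mem_univ_pi, ← forall_and]
  refine forall_congr' fun j => ?_
  have := ht j trivial
  by_cases hj : δ j <;> simp only [hj, if_true, Bool.false_eq_true, if_false, mem_Icc, mem_Ioc]
  · exact ⟨fun h => ⟨h.1.1, h.2⟩, fun h => ⟨⟨h.1, h.2.trans this.2⟩, h.2⟩⟩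
  · exact ⟨fun h => ⟨h.2, h.1.2⟩, fun h => ⟨⟨this.1.trans h.1.le, h.2⟩, h.1⟩⟩

theorem orthantBox_subset_unitCube (ht : t ∈ unitCube d) : orthantBox δ t ⊆ unitCube d :=
  setOf_orthant_eq_orthantBox ht ▸ fun _ hy j _ => hy.1 j

theorem volume_real_orthantBox (ht : t ∈ unitCube d) :
    volume.real (orthantBox δ t) = ∏ j, orthantSides δ t j := by
  rw [orthantBox, measureReal_def, volume_pi_pi, ENNReal.toReal_prod]
  refine Finset.prod_congr rfl fun j _ => ?_
  have := ht j trivial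
  by_cases hj : δ j <;> simp [orthantSides, hj, this.1, this.2]

theorem orthProb_mem_Icc {f : (Fin d → ℝ) → ℝ} {m M : ℝ} (hf_meas : Measurable f)
    (hf : ∀ y ∈ unitCube d, m ≤ f y ∧ f y ≤ M) (ht : t ∈ unitCube d) :
    orthProb d f δ t ∈ Icc (m * ∏ j, orthantSides δ t j) (M * ∏ j, orthantSides δ t j) := by
  have hsub := orthantBox_subset_unitCube (δ := δ) ht
  have hfin : volume (orthantBox δ t) ≠ ⊤ :=
    ne_top_of_le_ne_top (by simp [volume_unitCube]) (measure_mono hsub)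
  have hbound : ∀ y ∈ orthantBox δ t, m ≤ f y ∧ f y ≤ M := fun y hy => hf y (hsub hy)
  have hint : IntegrableOn f (orthantBox δ t) :=
    Measure.integrableOn_of_bounded (M := max |m| |M|) hfin hf_meas.aestronglyMeasurable <|
      (ae_restrict_iff' measurableSet_orthantBox).2 <| .of_forall fun y hy => by
        rw [Real.norm_eq_abs, abs_le]
        constructor <;> linarith [hbound y hy, le_max_left |m| |M|, le_max_right |m| |M|,
          neg_abs_le m, le_abs_self M]
  rw [orthProb, setOf_orthant_eq_orthantBox ht, ← volume_real_orthantBox ht]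
  refine ⟨setIntegral_ge_of_const_le_real measurableSet_orthantBox hfin
    (fun y hy => (hbound y hy).1) hint, ?_⟩
  calc ∫ y in orthantBox δ t, f y ≤ ∫ _ in orthantBox δ t, M :=
        setIntegral_mono_on hint (integrableOn_const hfin) measurableSet_orthantBox
          fun y hy => (hbound y hy).2
    _ = M * volume.real (orthantBox δ t) := by rw [setIntegral_const, smul_eq_mul, mul_comm]

end orthantBox

theorem setIntegral_inv_ite_le_mul_integral_invProdAbove {d : ℕ} (δ : Fin d → Bool)
    {p : (Fin d → ℝ) → ℝ} {σ c : ℝ} (hσ : 0 < σ) (hc : 0 < c)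
    (hp : ∀ t ∈ unitCube d,
      p t ∈ Icc (c⁻¹ * ∏ j, orthantSides δ t j) (c * ∏ j, orthantSides δ t j)) :
    ∫ t in unitCube d, (if σ < p t then (p t)⁻¹ else 0)
      ≤ c * ∫ t, invProdAbove d (σ / c) t := by
  have hmp := measurePreserving_orthantSides δ
  have hint : Integrable fun t => c * invProdAbove d (σ / c) (orthantSides δ t) :=
    (hmp.integrable_comp_of_integrable (integrable_invProdAbove (div_pos hσ hc))).const_mul c
  calc ∫ t in unitCube d, (if σ < p t then (p t)⁻¹ else 0)
      ≤ ∫ t in unitCube d, c * invProdAbove d (σ / c) (orthantSides δ t) := by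
        refine integral_mono_of_nonneg (.of_forall fun t => ?_) hint.integrableOn
          (ae_restrict_of_forall_mem (measurableSet_unitCube d) fun t ht => ?_)
        · dsimp only
          split_ifs with h
          · exact inv_nonneg.2 (hσ.le.trans h.le)
          · exact le_rfl
        · dsimp only
          rw [invProdAbove_of_mem_unitCube (orthantSides_mem_unitCube δ ht)]
          exact inv_ite_le_mul_inv_ite hσ.le hc (hp t ht).1 (hp t ht).2
    _ ≤ ∫ t, c * invProdAbove d (σ / c) (orthantSides δ t) :=
        setIntegral_le_integral hint (.of_forall fun t =>
          mul_nonneg hc.le (invProdAbove_nonneg _))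
    _ = c * ∫ t, invProdAbove d (σ / c) t := by
        rw [integral_const_mul,
          hmp.integral_comp (MeasurableEquiv.ofInvolutive _ (orthantSides_involutive δ)
            (measurable_orthantSides δ)).measurableEmbedding]

theorem mass_of_Q_sigma_bound_general (d : ℕ) (c1 c2 : ℝ) (hc1 : 0 < c1)
    (hc2 : 0 < c2) (f0 g0 : (Fin d → ℝ) → ℝ) (hf0 : Measurable f0)
    (hf : ∀ y ∈ Set.univ.pi fun _ : Fin d => Set.Icc (0:ℝ) 1, c1⁻¹ ≤ f0 y ∧ f0 y ≤ c1)
    (hg : ∀ y ∈ Set.univ.pi fun _ : Fin d => Set.Icc (0:ℝ) 1, c2⁻¹ ≤ g0 y ∧ g0 y ≤ c2)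
    (σ : ℝ) (hσ : 0 < σ) (hσ' : σ ≤ c1 * c2) :
    ∑ δ : Fin d → Bool,
        ∫ t in Set.univ.pi fun _ : Fin d => Set.Icc (0:ℝ) 1,
          (if σ < orthProb d f0 δ t * g0 t then (orthProb d f0 δ t * g0 t)⁻¹ else 0)
      ≤ 2^d * c1 * c2 / (Nat.factorial d) * (Real.log (c1 * c2 / σ))^d := by
  have hc : 0 < c1 * c2 := mul_pos hc1 hc2
  have hp : ∀ δ, ∀ t ∈ unitCube d, orthProb d f0 δ t * g0 t ∈
      Icc ((c1 * c2)⁻¹ * ∏ j, orthantSides δ t j) (c1 * c2 * ∏ j, orthantSides δ t j) :=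
    fun δ t ht => mul_mem_Icc_inv_mul hc1 hc2
      (Finset.prod_nonneg fun j _ => (orthantSides_mem_unitCube δ ht j trivial).1)
      (orthProb_mem_Icc hf0 hf ht) (hg t ht)
  have hlog : log⁺ (σ / (c1 * c2))⁻¹ = log (c1 * c2 / σ) := by
    rw [inv_div, posLog_eq_log_of_one_le ((one_le_div hσ).2 hσ')]
  calc _ ≤ ∑ _δ : Fin d → Bool, c1 * c2 * (log⁺ (σ / (c1 * c2))⁻¹ ^ d / d.factorial) :=
        Finset.sum_le_sum fun δ _ =>
          (setIntegral_inv_ite_le_mul_integral_invProdAbove δ hσ hc (hp δ)).trans <|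
            mul_le_mul_of_nonneg_left (integral_invProdAbove_le d (div_pos hσ hc)) hc.le
    _ = _ := by
        rw [hlog, Finset.sum_const, Finset.card_univ, Fintype.card_fun, Fintype.card_bool,
          Fintype.card_fin, nsmul_eq_mul]
        push_cast
        ring

/-- With `p0(δ,t) = p(t;δ) g0(t)`, for `0 < σ ≤ c1 c2`,
`∑_δ ∫_{[0,1]^d} p0(δ,t)⁻¹ 1{p0(δ,t) > σ} dt ≤ (2^d c1 c2 / d!)(log(c1 c2/σ))^d`. -/
theorem mass_of_Q_sigma_bound (d : ℕ) (hd : 1 ≤ d) (c1 c2 : ℝ) (hc1 : 0 < c1)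
    (hc2 : 0 < c2) (f0 g0 : (Fin d → ℝ) → ℝ) (hf0 : Measurable f0) (hg0 : Measurable g0)
    (hf : ∀ y ∈ Set.univ.pi fun _ : Fin d => Set.Icc (0:ℝ) 1, c1⁻¹ ≤ f0 y ∧ f0 y ≤ c1)
    (hg : ∀ y ∈ Set.univ.pi fun _ : Fin d => Set.Icc (0:ℝ) 1, c2⁻¹ ≤ g0 y ∧ g0 y ≤ c2)
    (σ : ℝ) (hσ : 0 < σ) (hσ' : σ ≤ c1 * c2) :
    ∑ δ : Fin d → Bool,
        ∫ t in Set.univ.pi fun _ : Fin d => Set.Icc (0:ℝ) 1,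
          (if σ < orthProb d f0 δ t * g0 t then (orthProb d f0 δ t * g0 t)⁻¹ else 0)
      ≤ 2^d * c1 * c2 / (Nat.factorial d) * (Real.log (c1 * c2 / σ))^d :=
  mass_of_Q_sigma_bound_general d c1 c2 hc1 hc2 f0 g0 hf0 hf hg σ hσ hσ'
end

section
/- Let P0 be a probability measure with density p0 with respect to μ, and let 𝒫 be a set of densities with respect to μ. Fix σ > 0 with ∫_{{p0 ≤ σ}} p0 dμ ≤ ε². If {[g_{L,j}, g_{U,j}] : j = 1,…,m} are ε-brackets in L2(P0) covering the class 𝒢_σ = {(2p/(p+p0))·1{p0 > σ} : p ∈ 𝒫}, then there exist 3ε-brackets in L2(P0) of cardinality m covering 𝒢 = {2p/(p+p0) : p ∈ 𝒫}. Hence N_{[]}(3ε, 𝒢, L2(P0)) ≤ N_{[]}(ε, 𝒢_σ, L2(P0)). -/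
open MeasureTheory

/-- van de Geer's first bracketing inequality: if `∫_{p0 ≤ σ} p0 dμ ≤ ε²` and
`𝒢_σ = {(2p/(p+p0))1{p0>σ} : p ∈ Pc}` is covered by `m` ε-brackets in `L2(P0)`,
then `𝒢 = {2p/(p+p0) : p ∈ Pc}` is covered by `m` 3ε-brackets in `L2(P0)`;
hence `N_{[]}(3ε, 𝒢, L2(P0)) ≤ N_{[]}(ε, 𝒢_σ, L2(P0))`. -/
theorem brackets_of_truncated_brackets {X : Type*} [MeasurableSpace X]
    (μ : Measure X) (p0 : X → ℝ) (hp0meas : Measurable p0) (hp0 : ∀ x, 0 ≤ p0 x)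
    (hp0int : Integrable p0 μ)
    (Pc : Set (X → ℝ)) (hPc : ∀ p ∈ Pc, ∀ x, 0 ≤ p x)
    (σ ε : ℝ) (hσ : 0 < σ) (hε : 0 < ε)
    (hsmall : ∫ x, (if p0 x ≤ σ then p0 x else 0) ∂μ ≤ ε^2)
    (m : ℕ) (gL gU : Fin m → X → ℝ)
    (hgmeas : ∀ j, Measurable (gL j) ∧ Measurable (gU j))
    (hgint : ∀ j, Integrable (fun x => (gU j x - gL j x)^2 * p0 x) μ)
    (hsize : ∀ j, ∫ x, (gU j x - gL j x)^2 * p0 x ∂μ ≤ ε^2)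
    (hcover : ∀ p ∈ Pc, ∃ j, ∀ x,
        gL j x ≤ (if σ < p0 x then 2 * p x / (p x + p0 x) else 0) ∧
        (if σ < p0 x then 2 * p x / (p x + p0 x) else 0) ≤ gU j x) :
    ∃ hL hU : Fin m → X → ℝ,
      (∀ j, ∫ x, (hU j x - hL j x)^2 * p0 x ∂μ ≤ (3 * ε)^2) ∧
      ∀ p ∈ Pc, ∃ j, ∀ x,
        hL j x ≤ 2 * p x / (p x + p0 x) ∧ 2 * p x / (p x + p0 x) ≤ hU j x := by
  refine ⟨fun j x => if σ < p0 x then gL j x else 0,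
          fun j x => if σ < p0 x then gU j x else 2, ?_, ?_⟩
  · intro j
    set F : X → ℝ := fun x =>
      ((if σ < p0 x then gU j x else 2) - (if σ < p0 x then gL j x else 0))^2 * p0 x with hF
    set B : X → ℝ := fun x =>
      (gU j x - gL j x)^2 * p0 x + 4 * (if p0 x ≤ σ then p0 x else 0) with hB
    have hFle : ∀ x, F x ≤ B x := by
      intro x
      simp only [hF, hB]
      by_cases h : σ < p0 x
      · simp [h, not_le.mpr h]
      · simp only [if_neg h, if_pos (not_lt.mp h)]
        have := mul_nonneg (sq_nonneg (gU j x - gL j x)) (hp0 x)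
        nlinarith [hp0 x]
    have hFnn : ∀ x, 0 ≤ F x := fun x => mul_nonneg (sq_nonneg _) (hp0 x)
    have hBint2 : Integrable (fun x => 4 * (if p0 x ≤ σ then p0 x else 0)) μ := by
      refine (Integrable.mono' hp0int ?_ ?_).const_mul 4
      · exact (Measurable.ite (hp0meas measurableSet_Iic) hp0meas measurable_const).aestronglyMeasurable
      · filter_upwards with x
        by_cases h : p0 x ≤ σ <;> simp [h, abs_of_nonneg (hp0 x), hp0 x]
    have hBint : Integrable B μ := (hgint j).add hBint2
    have hFmeas : Measurable F := by
      apply Measurable.mul _ hp0meas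
      exact ((Measurable.ite (measurableSet_lt measurable_const hp0meas)
        (hgmeas j).2 measurable_const).sub
        (Measurable.ite (measurableSet_lt measurable_const hp0meas)
        (hgmeas j).1 measurable_const)).pow_const 2
    have hFint : Integrable F μ := by
      refine Integrable.mono' hBint hFmeas.aestronglyMeasurable ?_
      filter_upwards with x
      rw [Real.norm_eq_abs, abs_of_nonneg (hFnn x)]
      exact hFle x
    calc ∫ x, F x ∂μ ≤ ∫ x, B x ∂μ := integral_mono hFint hBint hFle
      _ = (∫ x, (gU j x - gL j x)^2 * p0 x ∂μ)
            + 4 * ∫ x, (if p0 x ≤ σ then p0 x else 0) ∂μ := by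
          rw [integral_add (hgint j) hBint2, integral_const_mul]
      _ ≤ ε^2 + 4 * ε^2 := by
          have := hsize j
          have h2 := hsmall
          nlinarith
      _ ≤ (3 * ε)^2 := by nlinarith [sq_nonneg ε]
  · intro p hp
    obtain ⟨j, hj⟩ := hcover p hp
    refine ⟨j, fun x => ?_⟩
    by_cases h : σ < p0 x
    · have := hj x
      simp only [if_pos h] at this ⊢
      exact this
    · simp only [if_neg h]
      have hpx := hPc p hp x
      constructor
      · exact div_nonneg (by linarith) (by linarith [hp0 x])
      · rcases eq_or_lt_of_le (by linarith [hp0 x] : (0:ℝ) ≤ p x + p0 x) with he | hl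
        · simp [← he]
        · rw [div_le_iff₀ hl]; nlinarith [hp0 x]
end

section
/- Let p0 be a density with respect to μ and σ > 0. Define the measure Q_σ by dQ_σ = p0^{−1} 1{p0 > σ} dμ. If p_L ≤ p ≤ p_U are nonnegative functions with ‖p_U − p_L‖_{L2(Q_σ)} ≤ ε/2, then the functions g_L = (2p_L/(p_U+p0))1{p0>σ} and g_U = (2p_U/(p_U+p0))1{p0>σ} satisfy g_L ≤ (2p/(p+p0))1{p0>σ} ≤ g_U and ‖g_U − g_L‖_{L2(P0)} ≤ ε, where dP0 = p0 dμ. Consequently N_{[]}(ε, 𝒢_σ, L2(P0)) ≤ N_{[]}(ε/2, 𝒫, L2(Q_σ)). -/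
open MeasureTheory

/-- van de Geer's second bracketing inequality (per-bracket form): if `pL ≤ p ≤ pU`
are nonnegative with `‖pU − pL‖_{L2(Q_σ)} ≤ ε/2` where `dQ_σ = p0⁻¹ 1{p0>σ} dμ`,
then `gL = (2pL/(pU+p0))1{p0>σ}` and `gU = (2pU/(pU+p0))1{p0>σ}` bracket
`(2p/(p+p0))1{p0>σ}` and satisfy `‖gU − gL‖_{L2(P0)} ≤ ε` with `dP0 = p0 dμ`.
Consequently `N_{[]}(ε, 𝒢_σ, L2(P0)) ≤ N_{[]}(ε/2, 𝒫, L2(Q_σ))`. -/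
theorem truncated_bracket_from_density_bracket {X : Type*} [MeasurableSpace X]
    (μ : Measure X) (p0 : X → ℝ) (hp0meas : Measurable p0) (hp0 : ∀ x, 0 ≤ p0 x)
    (σ ε : ℝ) (hσ : 0 < σ) (hε : 0 < ε)
    (pL p pU : X → ℝ) (hpLm : Measurable pL) (hpm : Measurable p) (hpUm : Measurable pU)
    (hpL0 : ∀ x, 0 ≤ pL x) (hp0' : ∀ x, 0 ≤ p x) (hpU0 : ∀ x, 0 ≤ pU x)
    (hbr : ∀ x, pL x ≤ p x ∧ p x ≤ pU x)
    (hint : Integrable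
      (fun x => (pU x - pL x)^2 * ((p0 x)⁻¹ * (if σ < p0 x then 1 else 0))) μ)
    (hsize : ∫ x, (pU x - pL x)^2 * ((p0 x)⁻¹ * (if σ < p0 x then 1 else 0)) ∂μ
      ≤ (ε/2)^2) :
    (∀ x,
      (if σ < p0 x then 2 * pL x / (pU x + p0 x) else 0) ≤
        (if σ < p0 x then 2 * p x / (p x + p0 x) else 0) ∧
      (if σ < p0 x then 2 * p x / (p x + p0 x) else 0) ≤
        (if σ < p0 x then 2 * pU x / (pU x + p0 x) else 0)) ∧
    ∫ x, ((if σ < p0 x then 2 * pU x / (pU x + p0 x) else 0)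
          - (if σ < p0 x then 2 * pL x / (pU x + p0 x) else 0))^2 * p0 x ∂μ ≤ ε^2 := by
  constructor
  · intro x
    by_cases hx : σ < p0 x
    · simp only [hx, if_true]
      have hp : (0:ℝ) < p0 x := hσ.trans hx
      have ha : (0:ℝ) < p x + p0 x := by linarith [hp0' x]
      have hb : (0:ℝ) < pU x + p0 x := by linarith [hpU0 x]
      obtain ⟨h1, h2⟩ := hbr x
      constructor
      · rw [div_le_div_iff₀ hb ha]
        nlinarith [hpL0 x]
      · rw [div_le_div_iff₀ ha hb]
        nlinarith
    · simp [hx]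
  · have hpt : ∀ x,
        ((if σ < p0 x then 2 * pU x / (pU x + p0 x) else 0)
          - (if σ < p0 x then 2 * pL x / (pU x + p0 x) else 0))^2 * p0 x
        ≤ 4 * ((pU x - pL x)^2 * ((p0 x)⁻¹ * (if σ < p0 x then 1 else 0))) := by
      intro x
      by_cases hx : σ < p0 x
      · simp only [hx, if_true, mul_one]
        have hp : (0:ℝ) < p0 x := hσ.trans hx
        have hb : (0:ℝ) < pU x + p0 x := by linarith [hpU0 x]
        rw [div_sub_div_same, div_pow, div_mul_eq_mul_div]
        calc (2 * pU x - 2 * pL x) ^ 2 * p0 x / (pU x + p0 x) ^ 2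
            ≤ (2 * pU x - 2 * pL x) ^ 2 * p0 x / (p0 x) ^ 2 :=
              div_le_div_of_nonneg_left (by positivity) (by positivity)
                (by nlinarith [hpU0 x])
          _ = 4 * ((pU x - pL x) ^ 2 * (p0 x)⁻¹) := by
              field_simp
              ring
      · simp [hx]
    have hFnn : ∀ x, (0:ℝ) ≤
        ((if σ < p0 x then 2 * pU x / (pU x + p0 x) else 0)
          - (if σ < p0 x then 2 * pL x / (pU x + p0 x) else 0))^2 * p0 x := fun x =>
      mul_nonneg (sq_nonneg _) (hp0 x)
    calc ∫ x, ((if σ < p0 x then 2 * pU x / (pU x + p0 x) else 0)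
          - (if σ < p0 x then 2 * pL x / (pU x + p0 x) else 0))^2 * p0 x ∂μ
        ≤ ∫ x, 4 * ((pU x - pL x)^2 * ((p0 x)⁻¹ * (if σ < p0 x then 1 else 0))) ∂μ :=
          integral_mono_of_nonneg (ae_of_all _ hFnn) (hint.const_mul 4) (ae_of_all _ hpt)
      _ = 4 * ∫ x, (pU x - pL x)^2 * ((p0 x)⁻¹ * (if σ < p0 x then 1 else 0)) ∂μ :=
          integral_const_mul 4 _
      _ ≤ 4 * (ε/2)^2 := by linarith
      _ = ε^2 := by ring
end

section
/- Let d ≥ 2 and s = (d − 1/2)/(d − 1). Define c_d(u) = (d!/d^d) ∏_{j=1}^d u_j^{−(1−1/d)} · 1{∑_{j=1}^d u_j^{1/d} > d−1} on [0,1]^d. Then ∫_{[0,1]^d} c_d(u)^s du ≤ 2^d. -/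
/-!
Put `β = 1/(2d)`. On the cube, `c_d(u)^s = (d!/d^d)^s ∏ u_j^(β-1) · 1{∑ u_j^(2β) > d-1}`,
and `u^(2β) ≤ u^β` enlarges the indicator. Integrating out one coordinate at a time, the
substitution `y = x^β` turns the weight `x^(β-1) dx` into `β⁻¹ dy`, so by induction on `n`
`∫_{[0,1]^n} 1{∑ u_j^β > n - a} ∏ u_j^(β-1) du ≤ β^(-n) a₊^n / n!` (the volume of a simplex).
At `n = d`, `a = 1` this is `(2d)^d / d!`, and `(d!/d^d)^s ≤ d!/d^d` because `s ≥ 1`.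
-/

open MeasureTheory Set
open scoped ENNReal Nat

theorem lintegral_pi_fin_succ_cons {α : Type*} [MeasurableSpace α] (μ : Measure α)
    [SigmaFinite μ] {n : ℕ} {f : (Fin (n + 1) → α) → ℝ≥0∞} (hf : Measurable f) :
    ∫⁻ u, f u ∂Measure.pi (fun _ => μ)
      = ∫⁻ x, ∫⁻ y, f (Fin.cons x y) ∂Measure.pi (fun _ => μ) ∂μ := by
  let e := (MeasurableEquiv.piFinSuccAbove (fun _ : Fin (n + 1) => α) 0).symm
  rw [← ((measurePreserving_piFinSuccAbove (fun _ => μ) 0).symm _).lintegral_comp hf]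
  refine (lintegral_prod (fun z => f (e z)) (hf.comp e.measurable).aemeasurable).trans ?_
  simp only [e, MeasurableEquiv.piFinSuccAbove_symm_apply, Fin.insertNthEquiv_zero]
  rfl

theorem lintegral_Icc_comp_const_add_le (h : ℝ → ℝ≥0∞) (c : ℝ) :
    ∫⁻ y in Icc 0 1, h (c + y) ≤ ∫⁻ t in Iic (c + 1), h t := by
  have hshift := (measurePreserving_add_left volume c).setLIntegral_comp_preimage_emb
    (measurableEmbedding_addLeft c) h (Iic (c + 1))
  rw [preimage_const_add_Iic, add_sub_cancel_left] at hshift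
  exact hshift ▸ lintegral_mono_set Icc_subset_Iic_self

theorem lintegral_Iic_indicator_pow (n : ℕ) (a : ℝ) :
    ∫⁻ t in Iic a, (Ioi 0).indicator (fun t => ENNReal.ofReal (t ^ n)) t
      = ENNReal.ofReal (n + 1 : ℝ)⁻¹ *
          (Ioi 0).indicator (fun t => ENNReal.ofReal (t ^ (n + 1))) a := by
  rw [setLIntegral_indicator measurableSet_Ioi, inter_comm, Iic_inter_Ioi]
  rcases le_or_gt a 0 with ha | ha
  · simp [not_lt.mpr ha]
  · have hint : IntegrableOn (fun t : ℝ => t ^ n) (Ioc 0 a) :=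
      (continuous_pow n).integrableOn_Ioc
    have hpos : 0 ≤ᵐ[volume.restrict (Ioc 0 a)] fun t : ℝ => t ^ n :=
      (ae_restrict_iff' measurableSet_Ioc).mpr (ae_of_all _ fun t ht => pow_nonneg ht.1.le n)
    rw [← ofReal_integral_eq_lintegral_ofReal hint hpos, ← intervalIntegral.integral_of_le ha.le,
      integral_pow, indicator_of_mem (show a ∈ Ioi 0 from ha),
      ← ENNReal.ofReal_mul (by positivity)]
    congr 1
    ring

theorem lintegral_Icc_rpow_sub_one_mul_comp {β : ℝ} (hβ : 0 < β) (h : ℝ → ℝ≥0∞) :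
    ∫⁻ x in Icc 0 1, ENNReal.ofReal (x ^ (β - 1)) * h (x ^ β)
      = ENNReal.ofReal β⁻¹ * ∫⁻ y in Icc 0 1, h y := by
  have himage : (· ^ β) '' Ioc (0 : ℝ) 1 = Ioc 0 1 := by
    rw [((Real.continuous_rpow_const hβ.le).continuousOn).image_Ioc_of_strictMonoOn zero_le_one
      ((Real.strictMonoOn_rpow_Ici_of_exponent_pos hβ).mono Icc_subset_Ici_self),
      Real.zero_rpow hβ.ne', Real.one_rpow]
  have hderiv : ∀ x ∈ Ioc (0 : ℝ) 1, HasDerivWithinAt (· ^ β) (β * x ^ (β - 1)) (Ioc 0 1) x :=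
    fun x hx => (Real.hasDerivAt_rpow_const (Or.inl hx.1.ne')).hasDerivWithinAt
  have hinj : InjOn (· ^ β) (Ioc (0 : ℝ) 1) :=
    (Real.strictMonoOn_rpow_Ici_of_exponent_pos hβ).injOn.mono fun x hx => le_of_lt hx.1
  rw [← setLIntegral_congr Ioc_ae_eq_Icc, ← setLIntegral_congr Ioc_ae_eq_Icc]
  conv_rhs =>
    rw [← himage, lintegral_image_eq_lintegral_abs_deriv_mul measurableSet_Ioc hderiv hinj,
      ← lintegral_const_mul' _ _ ENNReal.ofReal_ne_top]
  refine setLIntegral_congr_fun measurableSet_Ioc fun x hx => ?_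
  rw [← mul_assoc, ← ENNReal.ofReal_mul (by positivity),
    abs_of_pos (by have := hx.1; positivity), inv_mul_cancel_left₀ hβ.ne']

noncomputable def cornerWeight (β : ℝ) (n : ℕ) (a : ℝ) (u : Fin n → ℝ) : ℝ≥0∞ :=
  if (n : ℝ) - a < ∑ j, u j ^ β then ∏ j, ENNReal.ofReal (u j ^ (β - 1)) else 0

theorem measurable_cornerWeight (β : ℝ) (n : ℕ) (a : ℝ) : Measurable (cornerWeight β n a) :=
  Measurable.ite (measurableSet_lt measurable_const (by fun_prop)) (by fun_prop) measurable_const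

theorem cornerWeight_cons (β : ℝ) (n : ℕ) (a x : ℝ) (y : Fin n → ℝ) :
    cornerWeight β (n + 1) a (Fin.cons x y)
      = ENNReal.ofReal (x ^ (β - 1)) * cornerWeight β n (a - 1 + x ^ β) y := by
  simp only [cornerWeight, Fin.sum_univ_succ, Fin.prod_univ_succ, Fin.cons_zero, Fin.cons_succ,
    mul_ite, mul_zero]
  congr 1
  push_cast
  exact propext ⟨fun _ => by linarith, fun _ => by linarith⟩

-- The indicator, rather than `max a 0 ^ n`, matters at `n = 0`: the region is empty for `a ≤ 0`.
theorem lintegral_cornerWeight_le {β : ℝ} (hβ : 0 < β) (n : ℕ) (a : ℝ) :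
    ∫⁻ u, cornerWeight β n a u ∂(Measure.pi fun _ => volume.restrict (Icc (0 : ℝ) 1))
      ≤ ENNReal.ofReal (β⁻¹ ^ n / n !) *
          (Ioi 0).indicator (fun t => ENNReal.ofReal (t ^ n)) a := by
  induction n generalizing a with
  | zero => simp [cornerWeight, indicator_apply]
  | succ n ih =>
    rw [lintegral_pi_fin_succ_cons _ (measurable_cornerWeight β (n + 1) a)]
    simp only [cornerWeight_cons, lintegral_const_mul' _ _ ENNReal.ofReal_ne_top]
    calc _ ≤ ∫⁻ x in Icc 0 1, ENNReal.ofReal (x ^ (β - 1)) *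
            (ENNReal.ofReal (β⁻¹ ^ n / n !) *
              (Ioi 0).indicator (fun t => ENNReal.ofReal (t ^ n)) (a - 1 + x ^ β)) := by
          gcongr with x
          exact ih _
      _ = ENNReal.ofReal (β⁻¹ ^ n / n !) * (ENNReal.ofReal β⁻¹ *
            ∫⁻ y in Icc 0 1, (Ioi 0).indicator (fun t => ENNReal.ofReal (t ^ n)) (a - 1 + y)) := by
          simp only [mul_left_comm _ (ENNReal.ofReal (β⁻¹ ^ n / n !))]
          rw [lintegral_const_mul' _ _ ENNReal.ofReal_ne_top,
            lintegral_Icc_rpow_sub_one_mul_comp hβ (fun y => (Ioi 0).indicator _ (a - 1 + y))]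
      _ ≤ ENNReal.ofReal (β⁻¹ ^ n / n !) * (ENNReal.ofReal β⁻¹ *
            ∫⁻ t in Iic a, (Ioi 0).indicator (fun t => ENNReal.ofReal (t ^ n)) t) := by
          gcongr _ * (_ * ?_)
          simpa using lintegral_Icc_comp_const_add_le
            ((Ioi 0).indicator fun t => ENNReal.ofReal (t ^ n)) (a - 1)
      _ = _ := by
          rw [lintegral_Iic_indicator_pow, ← mul_assoc, ← mul_assoc,
            ← ENNReal.ofReal_mul (by positivity), ← ENNReal.ofReal_mul (by positivity)]
          congr 2
          push_cast [Nat.factorial_succ, pow_succ]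
          field_simp

noncomputable def cd (d : ℕ) (u : Fin d → ℝ) : ℝ :=
  if (d : ℝ) - 1 < ∑ j, u j ^ (d : ℝ)⁻¹ then
    ((d ! : ℝ) / d ^ d) * ∏ j, u j ^ (-(1 - (d : ℝ)⁻¹))
  else 0

theorem measurable_cd (d : ℕ) : Measurable (cd d) :=
  Measurable.ite (measurableSet_lt measurable_const (by fun_prop)) (by fun_prop) measurable_const

theorem cd_nonneg {d : ℕ} {u : Fin d → ℝ} (hu : ∀ j, 0 ≤ u j) : 0 ≤ cd d u := by
  unfold cd
  split_ifs
  · exact mul_nonneg (by positivity) (Finset.prod_nonneg fun j _ => Real.rpow_nonneg (hu j) _)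
  · exact le_rfl

theorem ofReal_cd_rpow_le {d : ℕ} (hd : 2 ≤ d) {u : Fin d → ℝ}
    (hu : u ∈ univ.pi fun _ => Icc (0 : ℝ) 1) :
    ENNReal.ofReal (cd d u ^ (((d : ℝ) - 1 / 2) / ((d : ℝ) - 1)))
      ≤ ENNReal.ofReal (((d ! : ℝ) / d ^ d) ^ (((d : ℝ) - 1 / 2) / ((d : ℝ) - 1))) *
        cornerWeight (2 * d : ℝ)⁻¹ d 1 u := by
  have hd' : (2 : ℝ) ≤ d := by exact_mod_cast hd
  have hs : ((d : ℝ) - 1 / 2) / ((d : ℝ) - 1) ≠ 0 := by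
    apply ne_of_gt; apply div_pos <;> linarith
  have hu0 j : 0 ≤ u j := (hu j (mem_univ j)).1
  have hu1 j : u j ≤ 1 := (hu j (mem_univ j)).2
  have hprod : 0 ≤ ∏ j, u j ^ (-(1 - (d : ℝ)⁻¹)) :=
    Finset.prod_nonneg fun j _ => Real.rpow_nonneg (hu0 j) _
  unfold cd cornerWeight
  split_ifs with hcd hβ
  · rw [← ENNReal.ofReal_prod_of_nonneg fun j _ => Real.rpow_nonneg (hu0 j) _,
      ← ENNReal.ofReal_mul (by positivity), Real.mul_rpow (by positivity) hprod,
      ← Real.finsetProd_rpow _ _ fun j _ => Real.rpow_nonneg (hu0 j) _]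
    refine le_of_eq (congrArg _ (congrArg _ (Finset.prod_congr rfl fun j _ => ?_)))
    rw [← Real.rpow_mul (hu0 j)]
    have hd1 : (d : ℝ) - 1 ≠ 0 := by linarith
    congr 1
    field_simp
    ring
  · refine absurd (hcd.trans_le (Finset.sum_le_sum fun j _ => ?_)) hβ
    refine Real.rpow_le_rpow_of_exponent_ge' (hu0 j) (hu1 j) (by positivity) ?_
    exact inv_anti₀ (by positivity) (by linarith)
  all_goals rw [Real.zero_rpow hs, ENNReal.ofReal_zero]; exact bot_le

theorem factorial_div_pow_rpow_mul_le (d : ℕ) {s : ℝ} (hs : 1 ≤ s) :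
    ((d ! : ℝ) / d ^ d) ^ s * ((2 * d) ^ d / d !) ≤ 2 ^ d := by
  calc ((d ! : ℝ) / d ^ d) ^ s * ((2 * d) ^ d / d !)
      ≤ (d ! / d ^ d) * ((2 * d) ^ d / d !) := by
        gcongr
        exact Real.rpow_le_self_of_le_one (by positivity)
          (div_le_one_of_le₀ (by exact_mod_cast d.factorial_le_pow) (by positivity)) hs
    _ = 2 ^ d := by
        rw [mul_pow]
        field_simp

/-- For `d ≥ 2` and `s = (d − 1/2)/(d − 1)`, the density
`c_d(u) = (d!/d^d) ∏_j u_j^{−(1−1/d)} 1{∑_j u_j^{1/d} > d−1}` on `[0,1]^d`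
satisfies `∫ c_d(u)^s du ≤ 2^d`. -/
theorem cd_power_integral_le (d : ℕ) (hd : 2 ≤ d) :
    ∫ u in Set.univ.pi fun _ : Fin d => Set.Icc (0:ℝ) 1,
        (if (d:ℝ) - 1 < ∑ j, (u j) ^ ((d:ℝ)⁻¹) then
            ((Nat.factorial d : ℝ) / (d:ℝ)^d) * ∏ j, (u j) ^ (-(1 - (d:ℝ)⁻¹))
          else 0) ^ (((d:ℝ) - 1/2) / ((d:ℝ) - 1))
      ≤ 2^d := by
  set s : ℝ := ((d : ℝ) - 1 / 2) / ((d : ℝ) - 1)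
  set β : ℝ := (2 * d : ℝ)⁻¹
  have hd' : (2 : ℝ) ≤ d := by exact_mod_cast hd
  have hcube : MeasurableSet (univ.pi fun _ : Fin d => Icc (0 : ℝ) 1) :=
    MeasurableSet.univ_pi fun _ => measurableSet_Icc
  have hnonneg : 0 ≤ᵐ[volume.restrict (univ.pi fun _ : Fin d => Icc (0 : ℝ) 1)]
      fun u => cd d u ^ s := (ae_restrict_iff' hcube).mpr
    (ae_of_all _ fun u hu => Real.rpow_nonneg (cd_nonneg fun j => (hu j (mem_univ j)).1) s)
  change ∫ u in _, cd d u ^ s ≤ _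
  rw [integral_eq_lintegral_of_nonneg_ae hnonneg
    ((measurable_cd d).pow_const s).aestronglyMeasurable]
  refine ENNReal.toReal_le_of_le_ofReal (by positivity) ?_
  calc ∫⁻ u in univ.pi fun _ => Icc 0 1, ENNReal.ofReal (cd d u ^ s)
      ≤ ∫⁻ u in univ.pi fun _ => Icc 0 1,
          ENNReal.ofReal (((d ! : ℝ) / d ^ d) ^ s) * cornerWeight β d 1 u :=
        setLIntegral_mono' hcube fun u hu => ofReal_cd_rpow_le hd hu
    _ ≤ ENNReal.ofReal (((d ! : ℝ) / d ^ d) ^ s) * ENNReal.ofReal (β⁻¹ ^ d / d !) := by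
        rw [lintegral_const_mul' _ _ ENNReal.ofReal_ne_top, volume_pi, Measure.restrict_pi_pi]
        gcongr
        simpa using lintegral_cornerWeight_le (β := β) (by positivity) d 1
    _ ≤ ENNReal.ofReal (2 ^ d) := by
        rw [← ENNReal.ofReal_mul (by positivity), inv_inv]
        exact ENNReal.ofReal_le_ofReal (factorial_div_pow_rpow_mul_le d
          ((one_le_div (by linarith)).mpr (by linarith)))
end
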